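/- Let n ≥ 0 be an integer, b > 0 a real number, γ ∈ ℂ, and α, β ∈ ℂ with α + 1 + l ≠ 0 for every integer 0 ≤ l ≤ n−1. Then for all z, μ ∈ ℂ with Re z > 0 and Re μ > 0, ∫₀^b x^{z−1} · (b−x)^{μ−1} · P^{(α,β)}_n(1−γx) dx = ((α+1)^{(n)} · Γ(μ) · Γ(z) · b^{z+μ−1} / (n! · Γ(μ+z))) · Σ_{k=0}^{n} ((−n)^{(k)} · (n+α+β+1)^{(k)} · (z)^{(k)}) / ((α+1)^{(k)} · (μ+z)^{(k)} · k!) · (γb/2)^k. -/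

import Mathlib

/-!
Write `x = 1 - 2t`. Expanding `((x+1)/2)^(n-s) = (1-t)^(n-s)` binomially and collecting powers of
`t`, trinomial revision `C(n+α, n-s) C(n-s, k-s) = C(n+α, n-k) C(α+k, k-s)` followed by
Chu–Vandermonde turns the coefficient of `(-t)^k` into `C(n+α, n-k) C(n+α+β+k, k)`; since
`(α+1)_k ≠ 0` for `k ≤ n`, this is the `₂F₁` coefficient
`(α+1)_n (-n)_k (n+α+β+1)_k / (n! (α+1)_k k!)` up to the sign `(-1)^k`. Integrating term by term,
each power `x^k` shifts the Beta integral
`∫₀^b x^(w-1) (b-x)^(μ-1) dx = b^(w+μ-1) Γ(w) Γ(μ) / Γ(w+μ)` from `w = z` to `w = z + k`, and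
`Γ(w+k) = (w)_k Γ(w)` produces the factors `(z)_k / (μ+z)_k`.
-/

namespace Stmt8

noncomputable section

open MeasureTheory

/-- Pochhammer symbol `(a)^{(k)} = a(a+1)⋯(a+k−1)`. -/
def pochN (a : ℂ) (k : ℕ) : ℂ := ∏ i ∈ Finset.range k, (a + i)

/-- Generalized binomial coefficient `C(w,k) = w(w−1)⋯(w−k+1)/k!`. -/
def genBinom (w : ℂ) (k : ℕ) : ℂ := (∏ i ∈ Finset.range k, (w - i)) / (Nat.factorial k : ℂ)

/-- Jacobi polynomial `P^{(α,β)}_n(x)`. -/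
def jacobiP (n : ℕ) (α β x : ℂ) : ℂ :=
  ∑ s ∈ Finset.range (n + 1),
    genBinom ((n : ℂ) + α) (n - s) * genBinom ((n : ℂ) + β) s *
      ((x - 1) / 2) ^ s * ((x + 1) / 2) ^ (n - s)

open Finset Polynomial

lemma pochN_eq_eval_ascPochhammer (a : ℂ) (k : ℕ) : pochN a k = (ascPochhammer ℂ k).eval a := by
  induction k with
  | zero => simp [pochN]
  | succ k ih => rw [pochN, prod_range_succ, ← pochN, ih, ascPochhammer_succ_eval]

lemma pochN_add (a : ℂ) (m p : ℕ) : pochN a (m + p) = pochN a m * pochN (a + m) p := by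
  simp only [pochN, prod_range_add, add_assoc, Nat.cast_add]

lemma pochN_ne_zero {a : ℂ} {k : ℕ} (h : ∀ i < k, a + i ≠ 0) : pochN a k ≠ 0 :=
  prod_ne_zero_iff.mpr fun i hi => h i (mem_range.mp hi)

lemma pochN_neg_natCast {n k : ℕ} (hk : k ≤ n) :
    pochN (-n) k = (-1) ^ k * n.factorial / (n - k).factorial := by
  rw [pochN_eq_eval_ascPochhammer, ascPochhammer_eval_neg_eq_descPochhammer,
    descPochhammer_eval_eq_descFactorial, mul_div_assoc, ← Nat.factorial_mul_descFactorial hk,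
    Nat.cast_mul, mul_div_cancel_left₀ _ (Nat.cast_ne_zero.mpr (n - k).factorial_ne_zero)]

lemma choose_add_sub_one_eq (a : ℂ) (k : ℕ) :
    Ring.choose (a + k - 1) k = pochN a k / k.factorial := by
  rw [← Ring.multichoose_eq, eq_div_iff (Nat.cast_ne_zero.mpr k.factorial_ne_zero), mul_comm,
    ← nsmul_eq_mul, Ring.factorial_nsmul_multichoose_eq_ascPochhammer,
    ascPochhammer_smeval_eq_eval, pochN_eq_eval_ascPochhammer]

lemma genBinom_eq_choose (w : ℂ) (k : ℕ) : genBinom w k = Ring.choose w k := by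
  rw [genBinom, Ring.choose_eq_smul, ← aeval_eq_smeval, aeval_def, ← eval_map, descPochhammer_map,
    descPochhammer_eval_eq_prod_range, smul_eq_mul, div_eq_inv_mul]

lemma sum_choose_mul_choose_mul_choose {R : Type*} [CommRing R] [BinomialRing R] (r q : R)
    {n k : ℕ} (hk : k ≤ n) :
    ∑ s ∈ range (k + 1), Ring.choose r (n - s) * Ring.choose q s * ((n - s).choose (k - s) : R) =
      Ring.choose r (n - k) * Ring.choose (q + (r - (n - k : ℕ))) k := by
  rw [Ring.add_choose_eq _ (Commute.all _ _), Nat.sum_antidiagonal_eq_sum_range_succ_mk, mul_sum]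
  refine sum_congr rfl fun s hs => ?_
  have hs : s ≤ k := mem_range_succ_iff.mp hs
  have revision := Ring.choose_smul_choose r (show n - k ≤ n - s by omega)
  rw [show n - s - (n - k) = k - s by omega, nsmul_eq_mul] at revision
  rw [Nat.choose_symm_of_eq_add (show n - s = (k - s) + (n - k) by omega)]
  linear_combination Ring.choose q s * revision

lemma jacobiP_one_sub_two_mul (n : ℕ) (α β t : ℂ) :
    jacobiP n α β (1 - 2 * t) = ∑ k ∈ range (n + 1),
      Ring.choose (n + α) (n - k) * Ring.choose (n + α + β + k) k * (-t) ^ k := by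
  have expand : ∀ s ∈ range (n + 1), genBinom (n + α) (n - s) * genBinom (n + β) s *
      ((1 - 2 * t - 1) / 2) ^ s * ((1 - 2 * t + 1) / 2) ^ (n - s) =
      ∑ j ∈ range (n + 1 - s), Ring.choose (n + α) (n - s) * Ring.choose (n + β) s *
        ((n - s).choose j : ℂ) * (-t) ^ (s + j) := by
    intro s hs
    have hs : s ≤ n := mem_range_succ_iff.mp hs
    rw [show (1 - 2 * t + 1) / 2 = -t + 1 by ring, show (1 - 2 * t - 1) / 2 = -t by ring, add_pow,
      show n - s + 1 = n + 1 - s by omega, mul_sum, genBinom_eq_choose, genBinom_eq_choose]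
    refine sum_congr rfl fun j _ => ?_
    rw [one_pow, pow_add]
    ring
  rw [jacobiP, sum_congr rfl expand, ← sum_range_diag_flip]
  refine sum_congr rfl fun k hk => ?_
  have hk : k ≤ n := mem_range_succ_iff.mp hk
  rw [sum_congr rfl fun s hs => by rw [Nat.add_sub_cancel' (mem_range_succ_iff.mp hs)],
    ← sum_mul, sum_choose_mul_choose_mul_choose _ _ hk, Nat.cast_sub hk,
    show (n + β + (n + α - (n - k)) : ℂ) = n + α + β + k by ring]

lemma choose_mul_choose_eq_pochN {n k : ℕ} (hk : k ≤ n) (α β : ℂ)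
    (hα : ∀ l < n, α + 1 + l ≠ 0) :
    Ring.choose (n + α) (n - k) * Ring.choose (n + α + β + k) k * (-1) ^ k =
      pochN (α + 1) n * pochN (-n) k * pochN (n + α + β + 1) k /
        (n.factorial * pochN (α + 1) k * k.factorial) := by
  have h₁ : Ring.choose (n + α) (n - k) = pochN (α + 1 + k) (n - k) / (n - k).factorial := by
    rw [← choose_add_sub_one_eq, Nat.cast_sub hk]
    congr 1
    ring
  have h₂ : Ring.choose (n + α + β + k) k = pochN (n + α + β + 1) k / k.factorial := by
    rw [← choose_add_sub_one_eq]
    congr 1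
    ring
  have hsplit : pochN (α + 1) n = pochN (α + 1) k * pochN (α + 1 + k) (n - k) := by
    rw [← pochN_add, Nat.add_sub_cancel' hk]
  have hpoch : pochN (α + 1) k ≠ 0 := pochN_ne_zero fun i hi => hα i (hi.trans_le hk)
  rw [h₁, h₂, hsplit, pochN_neg_natCast hk]
  field_simp [Nat.factorial_ne_zero]

lemma jacobiP_one_sub_two_mul_eq_sum_pochN (n : ℕ) (α β : ℂ) (hα : ∀ l < n, α + 1 + l ≠ 0)
    (t : ℂ) :
    jacobiP n α β (1 - 2 * t) = ∑ k ∈ range (n + 1),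
      pochN (α + 1) n * pochN (-n) k * pochN (n + α + β + 1) k /
        (n.factorial * pochN (α + 1) k * k.factorial) * t ^ k := by
  rw [jacobiP_one_sub_two_mul]
  refine sum_congr rfl fun k hk => ?_
  rw [← choose_mul_choose_eq_pochN (mem_range_succ_iff.mp hk) α β hα, neg_pow]
  ring

lemma re_add_natCast_pos {w : ℂ} (hw : 0 < w.re) (k : ℕ) : 0 < (w + k).re := by
  simp only [Complex.add_re, Complex.natCast_re]
  positivity

lemma Gamma_add_natCast {w : ℂ} (hw : 0 < w.re) (k : ℕ) :
    Complex.Gamma (w + k) = pochN w k * Complex.Gamma w := by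
  have hw' : ∀ m : ℕ, w ≠ -m := fun m h => by
    have := congrArg Complex.re h
    simp only [Complex.neg_re, Complex.natCast_re] at this
    linarith [m.cast_nonneg (α := ℝ)]
  rw [pochN_eq_eval_ascPochhammer, ← Complex.Gamma_add_nat_div_Gamma_eq w hw',
    div_mul_cancel₀ _ (Complex.Gamma_ne_zero_of_re_pos hw)]

lemma exp_mul_log_eq_cpow {x : ℝ} (hx : 0 < x) (s : ℂ) :
    Complex.exp (s * Real.log x) = (x : ℂ) ^ s := by
  rw [Complex.cpow_def_of_ne_zero (Complex.ofReal_ne_zero.mpr hx.ne'), ← Complex.ofReal_log hx.le,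
    mul_comm]

section BetaIntegral

variable {b : ℝ} {w v : ℂ}

lemma integral_Ioo_cpow_mul_cpow_sub (hb : 0 < b) (hw : 0 < w.re) (hv : 0 < v.re) :
    ∫ x in Set.Ioo 0 b, (x : ℂ) ^ (w - 1) * ((b : ℂ) - x) ^ (v - 1) =
      (b : ℂ) ^ (w + v - 1) * (Complex.Gamma w * Complex.Gamma v / Complex.Gamma (w + v)) := by
  rw [← integral_Ioc_eq_integral_Ioo, ← intervalIntegral.integral_of_le hb.le,
    Complex.betaIntegral_scaled w v hb, Complex.Gamma_mul_Gamma_eq_betaIntegral hw hv,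
    mul_div_cancel_left₀ _ (Complex.Gamma_ne_zero_of_re_pos (by rw [Complex.add_re]; positivity))]

lemma integrableOn_Ioo_cpow_mul_cpow_sub (hb : 0 < b) (hw : 0 < w.re) (hv : 0 < v.re) :
    IntegrableOn (fun x : ℝ => (x : ℂ) ^ (w - 1) * ((b : ℂ) - x) ^ (v - 1)) (Set.Ioo 0 b) := by
  -- the Bochner integral of a non-integrable function is `0`
  refine Integrable.of_integral_ne_zero ?_
  rw [integral_Ioo_cpow_mul_cpow_sub hb hw hv]
  have hΓ (s : ℂ) (hs : 0 < s.re) := Complex.Gamma_ne_zero_of_re_pos hs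
  refine mul_ne_zero (Complex.cpow_ne_zero_iff.mpr (Or.inl ?_)) (div_ne_zero ?_ ?_)
  · exact Complex.ofReal_ne_zero.mpr hb.ne'
  · exact mul_ne_zero (hΓ w hw) (hΓ v hv)
  · exact hΓ _ (by rw [Complex.add_re]; positivity)

lemma integral_Ioo_cpow_add_natCast_mul_cpow_sub (hb : 0 < b) (hw : 0 < w.re) (hv : 0 < v.re)
    (k : ℕ) :
    ∫ x in Set.Ioo 0 b, (x : ℂ) ^ (w + k - 1) * ((b : ℂ) - x) ^ (v - 1) =
      Complex.Gamma v * Complex.Gamma w * (b : ℂ) ^ (w + v - 1) / Complex.Gamma (v + w) *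
        (pochN w k / pochN (v + w) k * (b : ℂ) ^ k) := by
  have hvw : 0 < (v + w).re := by rw [Complex.add_re]; positivity
  have hpoch : pochN (v + w) k ≠ 0 := left_ne_zero_of_mul <| by
    rw [← Gamma_add_natCast hvw]
    exact Complex.Gamma_ne_zero_of_re_pos (re_add_natCast_pos hvw k)
  rw [integral_Ioo_cpow_mul_cpow_sub hb (re_add_natCast_pos hw k) hv,
    Gamma_add_natCast hw, show w + k + v = v + w + k by ring, Gamma_add_natCast hvw,
    show v + w + k - 1 = w + v - 1 + k by ring,
    Complex.cpow_add _ _ (Complex.ofReal_ne_zero.mpr hb.ne'), Complex.cpow_natCast]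
  field_simp

end BetaIntegral

/-- Mellin-type integral of a Jacobi polynomial against `x^{z−1}(b−x)^{μ−1}` on `(0,b)`,
expressed as a terminating `₃F₂`-type sum. -/
theorem stmt_8 (n : ℕ) (b : ℝ) (hb : 0 < b) (γ α β : ℂ)
    (hα : ∀ l : ℕ, l < n → α + 1 + (l : ℂ) ≠ 0)
    (z μ : ℂ) (hz : 0 < z.re) (hμ : 0 < μ.re) :
    ∫ x in Set.Ioo (0 : ℝ) b,
        Complex.exp ((z - 1) * Real.log x) * Complex.exp ((μ - 1) * Real.log (b - x)) *
          jacobiP n α β (1 - γ * x) =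
      pochN (α + 1) n * Complex.Gamma μ * Complex.Gamma z *
          (b : ℂ) ^ (z + μ - 1) / ((Nat.factorial n : ℂ) * Complex.Gamma (μ + z)) *
        ∑ k ∈ Finset.range (n + 1),
          (pochN (-(n : ℂ)) k * pochN ((n : ℂ) + α + β + 1) k * pochN z k) /
              (pochN (α + 1) k * pochN (μ + z) k * (Nat.factorial k : ℂ)) *
            (γ * b / 2) ^ k := by
  have hintegrand : Set.EqOn
      (fun x : ℝ => Complex.exp ((z - 1) * Real.log x) *
        Complex.exp ((μ - 1) * Real.log (b - x)) * jacobiP n α β (1 - γ * x))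
      (fun x : ℝ => ∑ k ∈ range (n + 1),
        pochN (α + 1) n * pochN (-n) k * pochN (n + α + β + 1) k /
          (n.factorial * pochN (α + 1) k * k.factorial) * (γ / 2) ^ k *
          ((x : ℂ) ^ (z + k - 1) * ((b : ℂ) - x) ^ (μ - 1)))
      (Set.Ioo 0 b) := by
    rintro x ⟨hx, hxb⟩
    dsimp only
    rw [exp_mul_log_eq_cpow hx, exp_mul_log_eq_cpow (sub_pos.mpr hxb),
      show 1 - γ * x = 1 - 2 * (γ * x / 2) by ring, jacobiP_one_sub_two_mul_eq_sum_pochN n α β hα,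
      mul_sum]
    refine sum_congr rfl fun k _ => ?_
    rw [add_sub_right_comm, Complex.cpow_add _ _ (Complex.ofReal_ne_zero.mpr hx.ne'),
      Complex.cpow_natCast]
    push_cast
    ring
  rw [setIntegral_congr_fun measurableSet_Ioo hintegrand, integral_finsetSum _ fun k _ =>
    (integrableOn_Ioo_cpow_mul_cpow_sub hb (re_add_natCast_pos hz k) hμ).const_mul _, mul_sum]
  refine sum_congr rfl fun k _ => ?_
  rw [integral_const_mul, integral_Ioo_cpow_add_natCast_mul_cpow_sub hb hz hμ k]
  ring

end

end Stmt8
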